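/- arXiv:2512.21611 — 2 statements merged into one kernel-verified Lean document; each statement's English description precedes it below -/
import Mathlib

section
/- Let Γ be a finite connected tetravalent graph, G ≤ Aut(Γ) with Γ G-arc-transitive, and u a vertex of Γ. Suppose M is a subgroup of G maximal subject to Γ being M-half-arc-transitive, and suppose M_u^{Γ(u)} is a normal subgroup of G_u^{Γ(u)}. Then G_u^{[1]} = M_u^{[1]}, i.e., the kernel of G_u acting on Γ(u) equals the kernel of M_u acting on Γ(u). -/
open SimpleGraph

variable {V : Type*}

/-- The automorphism group of a simple graph, as a subgroup of the group of
permutations of the vertex set. -/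
def autGroup (Γ : SimpleGraph V) : Subgroup (Equiv.Perm V) where
  carrier := {g | ∀ u v : V, Γ.Adj (g u) (g v) ↔ Γ.Adj u v}
  one_mem' := by intro u v; simp
  mul_mem' := by
    intro a b ha hb u v
    rw [Equiv.Perm.mul_apply, Equiv.Perm.mul_apply, ha, hb]
  inv_mem' := by
    intro a ha u v
    simpa using (ha (a⁻¹ u) (a⁻¹ v)).symm

/-- `M` is transitive on the vertices of a graph on `V`. -/
def VertexTransitive (_Γ : SimpleGraph V) (M : Subgroup (Equiv.Perm V)) : Prop :=
  ∀ u v : V, ∃ g ∈ M, g u = v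

/-- `M` is transitive on the edges of `Γ`. -/
def EdgeTransitive (Γ : SimpleGraph V) (M : Subgroup (Equiv.Perm V)) : Prop :=
  ∀ u v x y : V, Γ.Adj u v → Γ.Adj x y →
    ∃ g ∈ M, (g u = x ∧ g v = y) ∨ (g u = y ∧ g v = x)

/-- `M` is transitive on the arcs (ordered pairs of adjacent vertices) of `Γ`. -/
def ArcTransitive (Γ : SimpleGraph V) (M : Subgroup (Equiv.Perm V)) : Prop :=
  ∀ u v x y : V, Γ.Adj u v → Γ.Adj x y → ∃ g ∈ M, g u = x ∧ g v = y

/-- `Γ` is `M`-half-arc-transitive: `M` consists of automorphisms of `Γ` and is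
vertex- and edge- but not arc-transitive. -/
def HalfArcTransitive (Γ : SimpleGraph V) (M : Subgroup (Equiv.Perm V)) : Prop :=
  M ≤ autGroup Γ ∧ VertexTransitive Γ M ∧ EdgeTransitive Γ M ∧ ¬ ArcTransitive Γ M

/-- `p`, restricted to `{0, …, s}`, is an `s`-arc of `Γ`. -/
def IsSArc (Γ : SimpleGraph V) (s : ℕ) (p : ℕ → V) : Prop :=
  (∀ i < s, Γ.Adj (p i) (p (i + 1))) ∧ ∀ j, 1 ≤ j → j < s → p (j - 1) ≠ p (j + 1)

/-- `Γ` is `(H, t)`-arc-transitive: `H` consists of automorphisms of `Γ` and is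
transitive on the `t`-arcs of `Γ`. -/
def SArcTransitive (Γ : SimpleGraph V) (H : Subgroup (Equiv.Perm V)) (t : ℕ) : Prop :=
  H ≤ autGroup Γ ∧ ∀ p q : ℕ → V, IsSArc Γ t p → IsSArc Γ t q →
    ∃ g ∈ H, ∀ i ≤ t, g (p i) = q i

/-- `Γ` is `(H, t)`-transitive: `(H, t)`-arc-transitive but not `(H, t+1)`-arc-transitive. -/
def STransitive (Γ : SimpleGraph V) (H : Subgroup (Equiv.Perm V)) (t : ℕ) : Prop :=
  SArcTransitive Γ H t ∧ ¬ SArcTransitive Γ H (t + 1)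

/-- `M` is a maximal subgroup of `H`. -/
def IsMaximalSubgroup {G : Type*} [Group G] (M H : Subgroup G) : Prop :=
  M < H ∧ ∀ N : Subgroup G, M ≤ N → N ≤ H → N = M ∨ N = H

/-- `(M, H)` is a maximal `(1/2, t)`-pair of `Γ`: `M` is a maximal subgroup of `H`,
`Γ` is `M`-half-arc-transitive, and `Γ` is `(H, t)`-transitive. -/
def MaximalHalfPair (Γ : SimpleGraph V) (M H : Subgroup (Equiv.Perm V)) (t : ℕ) : Prop :=
  IsMaximalSubgroup M H ∧ HalfArcTransitive Γ M ∧ STransitive Γ H t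

/-- `Γ` is regular of valency `4`. -/
def Tetravalent (Γ : SimpleGraph V) : Prop := ∀ v : V, (Γ.neighborSet v).ncard = 4

/-- `M` is a normal subgroup of `H` (both given as subgroups of an ambient group). -/
def NormalIn {G : Type*} [Group G] (M H : Subgroup G) : Prop :=
  ∀ h ∈ H, ∀ m ∈ M, h * m * h⁻¹ ∈ M

/-- The normal core of `M` in `H` (for `M ≤ H`): the largest normal subgroup of `H`
contained in `M`, namely the intersection of the `H`-conjugates of `M`. -/
def coreIn {G : Type*} [Group G] (H M : Subgroup G) : Subgroup G where
  carrier := {g | ∀ h ∈ H, h⁻¹ * g * h ∈ M}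
  one_mem' := by intro h hh; simpa using M.one_mem
  mul_mem' := by
    intro a b ha hb h hh
    have e : h⁻¹ * (a * b) * h = (h⁻¹ * a * h) * (h⁻¹ * b * h) := by group
    rw [e]; exact M.mul_mem (ha h hh) (hb h hh)
  inv_mem' := by
    intro a ha h hh
    have e : h⁻¹ * a⁻¹ * h = (h⁻¹ * a * h)⁻¹ := by group
    rw [e]; exact M.inv_mem (ha h hh)

/-- `K` is semiregular on `V`: all point stabilizers are trivial. -/
def Semiregular (K : Subgroup (Equiv.Perm V)) : Prop :=
  ∀ g ∈ K, ∀ v : V, g v = v → g = 1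

/-- The normal quotient graph `Γ_K`: vertices are the `K`-orbits on `V`, two distinct
orbits being adjacent iff `Γ` has an edge between them. -/
def quotientGraph (Γ : SimpleGraph V) (K : Subgroup (Equiv.Perm V)) :
    SimpleGraph (Quotient (MulAction.orbitRel K V)) where
  Adj x y := x ≠ y ∧ ∃ u v : V, Γ.Adj u v ∧
      Quotient.mk (MulAction.orbitRel K V) u = x ∧ Quotient.mk (MulAction.orbitRel K V) v = y
  symm := ⟨by
    rintro x y ⟨hxy, u, v, h, hu, hv⟩
    exact ⟨hxy.symm, v, u, h.symm, hv, hu⟩⟩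
  loopless := ⟨fun x h => h.1 rfl⟩

/-- The set of elements of `H` stabilizing every `K`-orbit, i.e. the kernel of the
action of `H` on the vertex set of the normal quotient graph `Γ_K`. -/
def quotKernelSet (H K : Subgroup (Equiv.Perm V)) : Set (Equiv.Perm V) :=
  {h | h ∈ H ∧ ∀ v : V, h v ∈ MulAction.orbit K v}

/-- The permutation group induced by `H` on the set of `K`-orbits; when `K` is the
kernel of the action of `H` on the set of `K`-orbits, this is (a faithful copy of)
the quotient group `H/K` acting on the normal quotient graph `Γ_K`. -/
def inducedQuot (K H : Subgroup (Equiv.Perm V)) :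
    Subgroup (Equiv.Perm (Quotient (MulAction.orbitRel K V))) where
  carrier := {σ | ∃ h ∈ H, ∀ v : V,
    σ (Quotient.mk (MulAction.orbitRel K V) v) = Quotient.mk (MulAction.orbitRel K V) (h v)}
  one_mem' := ⟨1, H.one_mem, fun v => by simp⟩
  mul_mem' := by
    rintro σ τ ⟨g, hg, hσ⟩ ⟨k, hk, hτ⟩
    refine ⟨g * k, H.mul_mem hg hk, fun v => ?_⟩
    rw [Equiv.Perm.mul_apply, hτ v, hσ (k v), Equiv.Perm.mul_apply]
  inv_mem' := by
    rintro σ ⟨g, hg, hσ⟩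
    refine ⟨g⁻¹, H.inv_mem hg, fun v => ?_⟩
    have h1 := hσ (g⁻¹ v)
    rw [← Equiv.Perm.mul_apply, mul_inv_cancel, Equiv.Perm.one_apply] at h1
    rw [← h1, ← Equiv.Perm.mul_apply, inv_mul_cancel, Equiv.Perm.one_apply]

/-- The permutation group `M_u^{Γ(u)}` induced on the neighbourhood `Γ(u)` by the
vertex stabilizer `M_u`. -/
def localGroup (Γ : SimpleGraph V) (M : Subgroup (Equiv.Perm V)) (u : V) :
    Subgroup (Equiv.Perm (Γ.neighborSet u)) where
  carrier := {σ | ∃ g ∈ M, g u = u ∧ ∀ v : Γ.neighborSet u, (σ v : V) = g (v : V)}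
  one_mem' := ⟨1, M.one_mem, by simp, fun v => by simp⟩
  mul_mem' := by
    rintro σ τ ⟨g, hg, hgu, hσ⟩ ⟨k, hk, hku, hτ⟩
    refine ⟨g * k, M.mul_mem hg hk, by rw [Equiv.Perm.mul_apply, hku, hgu], fun v => ?_⟩
    simp only [Equiv.Perm.mul_apply]
    rw [hσ (τ v), hτ v]
  inv_mem' := by
    rintro σ ⟨g, hg, hgu, hσ⟩
    have hgu' : g⁻¹ u = u := g.injective (by rw [← Equiv.Perm.mul_apply, mul_inv_cancel, Equiv.Perm.one_apply, hgu])
    refine ⟨g⁻¹, M.inv_mem hg, hgu', fun v => ?_⟩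
    have h1 := hσ (σ⁻¹ v)
    rw [← Equiv.Perm.mul_apply, mul_inv_cancel, Equiv.Perm.one_apply] at h1
    rw [h1, ← Equiv.Perm.mul_apply, inv_mul_cancel, Equiv.Perm.one_apply]

/-- The kernel `M_u^{[1]}` of the action of the vertex stabilizer `M_u` on the
neighbourhood `Γ(u)`, as a subgroup of `Equiv.Perm V`. -/
def localKernel (Γ : SimpleGraph V) (M : Subgroup (Equiv.Perm V)) (u : V) :
    Subgroup (Equiv.Perm V) :=
  (M ⊓ MulAction.stabilizer (Equiv.Perm V) u) ⊓
    ⨅ v ∈ Γ.neighborSet u, MulAction.stabilizer (Equiv.Perm V) v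

/-- The complete bipartite graph `K_{5,5}` minus a perfect matching. -/
def K55minusMatching : SimpleGraph (Fin 2 × Fin 5) where
  Adj x y := x.1 ≠ y.1 ∧ x.2 ≠ y.2
  symm := ⟨by rintro x y ⟨h1, h2⟩; exact ⟨h1.symm, h2.symm⟩⟩
  loopless := ⟨fun x h => h.1 rfl⟩

instance : Fact (Nat.Prime 5) := ⟨by norm_num⟩
instance : Fact (Nat.Prime 7) := ⟨by norm_num⟩

/-- The one-dimensional affine group `AGL_1(p)`: the group of affine permutations
`x ↦ a * x + b` (`a ≠ 0`) of `ZMod p`.  It is isomorphic to `Z_p ⋊ Z_{p-1}` with the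
faithful action; for `p = 5` it is the Frobenius group `Z_5 ⋊ Z_4` of order `20`. -/
def AGL1 (p : ℕ) [Fact (Nat.Prime p)] : Subgroup (Equiv.Perm (ZMod p)) where
  carrier := {f | ∃ a b : ZMod p, a ≠ 0 ∧ ∀ x, f x = a * x + b}
  one_mem' := ⟨1, 0, one_ne_zero, fun x => by simp⟩
  mul_mem' := by
    rintro f g ⟨a1, b1, ha1, hf⟩ ⟨a2, b2, ha2, hg⟩
    refine ⟨a1 * a2, a1 * b2 + b1, mul_ne_zero ha1 ha2, fun x => ?_⟩
    rw [Equiv.Perm.mul_apply, hg, hf]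
    ring
  inv_mem' := by
    rintro f ⟨a, b, ha, hf⟩
    refine ⟨a⁻¹, -(a⁻¹ * b), inv_ne_zero ha, fun x => ?_⟩
    have h1 : f (a⁻¹ * x + -(a⁻¹ * b)) = x := by
      rw [hf]
      field_simp
      ring
    rw [← h1, ← Equiv.Perm.mul_apply, inv_mul_cancel, Equiv.Perm.one_apply, h1]

/-- The Cayley graph `Cay(G, S)`: for an inverse-closed `S ⊆ G \ {1}`, `x` and `y`
are adjacent iff `y * x⁻¹ ∈ S`. -/
def cayleyGraph (G : Type*) [Group G] (S : Set G) : SimpleGraph G :=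
  SimpleGraph.fromRel (fun x y => y * x⁻¹ ∈ S)

/-- The image `R(G)` of the right regular representation of `G` in `Equiv.Perm G`. -/
def rightRegular (G : Type*) [Group G] : Subgroup (Equiv.Perm G) where
  carrier := {σ | ∃ g : G, ∀ x : G, σ x = x * g}
  one_mem' := ⟨1, fun x => by simp⟩
  mul_mem' := by
    rintro σ τ ⟨g, hσ⟩ ⟨k, hτ⟩
    exact ⟨k * g, fun x => by rw [Equiv.Perm.mul_apply, hτ, hσ, mul_assoc]⟩
  inv_mem' := by
    rintro σ ⟨g, hσ⟩
    refine ⟨g⁻¹, fun x => ?_⟩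
    have h1 : σ (x * g⁻¹) = x := by rw [hσ, inv_mul_cancel_right]
    rw [← h1, ← Equiv.Perm.mul_apply, inv_mul_cancel, Equiv.Perm.one_apply, h1]

/-- The coordinate-swapping automorphism of `A × A`. -/
def swapAut (A : Type*) [Group A] : MulAut (A × A) := MulEquiv.prodComm

lemma swapAut_sq (A : Type*) [Group A] : swapAut A ^ 2 = 1 := by
  rw [pow_two]
  exact MulEquiv.ext fun p => rfl

/-- The homomorphism `Z_2 →* Aut(A × A)` sending the generator to the coordinate swap. -/
def swapHom (A : Type*) [Group A] : Multiplicative (ZMod 2) →* MulAut (A × A) where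
  toFun x := swapAut A ^ (Multiplicative.toAdd x).val
  map_one' := by simp
  map_mul' x y := by
    have h2 : swapAut A ^ 2 = 1 := swapAut_sq A
    show swapAut A ^ (Multiplicative.toAdd (x * y)).val = _
    have e : Multiplicative.toAdd (x * y) = Multiplicative.toAdd x + Multiplicative.toAdd y := rfl
    rw [e, ZMod.val_add, ← pow_eq_pow_mod _ h2, pow_add]

/-- The semidirect product `(A × A) ⋊ Z_2` in which `Z_2` swaps the two direct
factors; for a group `A` this is the wreath product `A ≀ Z_2`. -/
abbrev wreathZ2 (A : Type*) [Group A] :=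
  SemidirectProduct (A × A) (Multiplicative (ZMod 2)) (swapHom A)

/-- The projective general linear group `PGL_2(7) = GL_2(7)/Z(GL_2(7))`. -/
abbrev PGL2_7 :=
  Matrix.GeneralLinearGroup (Fin 2) (ZMod 7) ⧸
    Subgroup.center (Matrix.GeneralLinearGroup (Fin 2) (ZMod 7))

/-- The semidirect product `Z_3 ⋊ S_4` of order 72 in which the kernel of the action
of `S_4` on `Z_3` is `A_4`: concretely, the subgroup of `S_3 × S_4` consisting of the
pairs of permutations of equal sign. -/
def Z3rtimesS4 : Subgroup (Equiv.Perm (Fin 3) × Equiv.Perm (Fin 4)) :=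
  MonoidHom.ker ((Equiv.Perm.sign.comp (MonoidHom.fst (Equiv.Perm (Fin 3)) (Equiv.Perm (Fin 4)))) *
    (Equiv.Perm.sign.comp (MonoidHom.snd (Equiv.Perm (Fin 3)) (Equiv.Perm (Fin 4)))))

/-- `C` is (the vertex set of) an `M`-alternating cycle of `Γ`: a cycle along which
any two consecutive arcs lie in different `M`-orbits, i.e. consecutive edges have
opposite orientations in the orientations of `Γ` given by the two `M`-orbits on arcs. -/
def IsAltCycle (Γ : SimpleGraph V) (M : Subgroup (Equiv.Perm V)) (C : Set V) : Prop :=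
  ∃ n : ℕ, 3 ≤ n ∧ ∃ c : ZMod n → V, Function.Injective c ∧ Set.range c = C ∧
    (∀ i, Γ.Adj (c i) (c (i + 1))) ∧
    (∀ i, ¬ ∃ g ∈ M, g (c i) = c (i + 1) ∧ g (c (i + 1)) = c (i + 2))

/-- The graph `Alt_M(Γ)` of `M`-alternating cycles: vertices are the `M`-alternating
cycles of `Γ`, two of them being adjacent iff they have a common vertex. -/
def altGraph (Γ : SimpleGraph V) (M : Subgroup (Equiv.Perm V)) :
    SimpleGraph {C : Set V // IsAltCycle Γ M C} where
  Adj C D := C ≠ D ∧ (C.1 ∩ D.1).Nonempty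
  symm := ⟨by
    rintro C D ⟨h1, x, hx⟩
    exact ⟨h1.symm, x, hx.2, hx.1⟩⟩
  loopless := ⟨fun C h => h.1 rfl⟩

theorem Equiv.Perm.apply_inv_self {α : Type*} (f : Equiv.Perm α) (x : α) : f (f⁻¹ x) = x :=
  Equiv.apply_symm_apply f x

theorem Equiv.Perm.inv_apply_self {α : Type*} (f : Equiv.Perm α) (x : α) : f⁻¹ (f x) = x :=
  Equiv.symm_apply_apply f x

/-- auxiliary: the permutation of the neighbourhood induced by an automorphism fixing `u`. -/
def nbrPerm (Γ : SimpleGraph V) (g : Equiv.Perm V) (u : V) (hg : g ∈ autGroup Γ)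
    (hu : g u = u) : Equiv.Perm (Γ.neighborSet u) where
  toFun v := ⟨g v, by have := (hg u v).mpr v.2; rwa [hu] at this⟩
  invFun v := ⟨g⁻¹ v, by
    have := ((Subgroup.inv_mem (autGroup Γ) hg : g⁻¹ ∈ autGroup Γ) u v).mpr v.2
    have hu' : g⁻¹ u = u := g.injective (by rw [Equiv.Perm.apply_inv_self, hu])
    rwa [hu'] at this⟩
  left_inv v := by ext; simp
  right_inv v := by ext; simp

lemma nbrPerm_mem {Γ : SimpleGraph V} {G : Subgroup (Equiv.Perm V)} {g : Equiv.Perm V} {u : V}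
    (hg : g ∈ autGroup Γ) (hgG : g ∈ G) (hu : g u = u) :
    nbrPerm Γ g u hg hu ∈ localGroup Γ G u := ⟨g, hgG, hu, fun _ => rfl⟩

/-- Lemma 3.2(b): for a connected tetravalent `G`-arc-transitive graph with `M ≤ G`
maximal subject to `Γ` being `M`-half-arc-transitive and `M_u^{Γ(u)} ⊴ G_u^{Γ(u)}`,
the kernels of `G_u` and of `M_u` acting on `Γ(u)` coincide. -/
theorem statement5 {V : Type*} [Fintype V] (Γ : SimpleGraph V)
    (hconn : Γ.Connected) (htetra : Tetravalent Γ)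
    (G : Subgroup (Equiv.Perm V)) (hG : G ≤ autGroup Γ) (hAT : ArcTransitive Γ G)
    (u : V) (M : Subgroup (Equiv.Perm V)) (hMG : M ≤ G)
    (hhat : HalfArcTransitive Γ M)
    (hmax : ∀ N : Subgroup (Equiv.Perm V), M ≤ N → N ≤ G → HalfArcTransitive Γ N → N = M)
    (hnormal : NormalIn (localGroup Γ M u) (localGroup Γ G u)) :
    localKernel Γ G u = localKernel Γ M u := by
  classical
  obtain ⟨hMaut, hVT, hET, hnAT⟩ := hhat
  obtain ⟨b, hb⟩ : (Γ.neighborSet u).Nonempty :=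
    Set.nonempty_of_ncard_ne_zero (by rw [htetra u]; norm_num)
  have hab : Γ.Adj u b := hb
  -- the M-invariant orientation: D x y iff (x, y) is in the M-orbit of the arc (u, b)
  let D : V → V → Prop := fun x y => ∃ m, m ∈ M ∧ m u = x ∧ m b = y
  have F1 : ∀ {x y}, D x y → Γ.Adj x y := by
    rintro x y ⟨m, hm, rfl, rfl⟩
    exact (hMaut hm u b).mpr hab
  have F2 : ∀ m ∈ M, ∀ {x y}, D x y → D (m x) (m y) := by
    rintro m hm x y ⟨n, hn, rfl, rfl⟩
    exact ⟨m * n, M.mul_mem hm hn, rfl, rfl⟩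
  have F2iff : ∀ m ∈ M, ∀ x y, D x y ↔ D (m x) (m y) := by
    intro m hm x y
    refine ⟨F2 m hm, fun h => ?_⟩
    have h2 := F2 m⁻¹ (M.inv_mem hm) h
    simpa using h2
  have F3 : ∀ {x y}, Γ.Adj x y → D x y ∨ D y x := by
    intro x y hxy
    obtain ⟨g, hg, hcase⟩ := hET u b x y hab hxy
    rcases hcase with ⟨h1, h2⟩ | ⟨h1, h2⟩
    · exact Or.inl ⟨g, hg, h1, h2⟩
    · exact Or.inr ⟨g, hg, h1, h2⟩
  have F4 : ∀ {x y}, D x y → D y x → False := by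
    rintro x y ⟨m1, hm1, hm1u, hm1b⟩ ⟨m2, hm2, hm2u, hm2b⟩
    refine hnAT ?_
    have hsM : m1⁻¹ * m2 ∈ M := M.mul_mem (M.inv_mem hm1) hm2
    have hsu : (m1⁻¹ * m2) u = b := by
      rw [Equiv.Perm.mul_apply, hm2u, ← hm1b, Equiv.Perm.inv_apply_self]
    have hsb : (m1⁻¹ * m2) b = u := by
      rw [Equiv.Perm.mul_apply, hm2b, ← hm1u, Equiv.Perm.inv_apply_self]
    intro p q x' y' hpq hxy
    obtain ⟨g, hg, hcase⟩ := hET p q x' y' hpq hxy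
    rcases hcase with ⟨h1, h2⟩ | ⟨h1, h2⟩
    · exact ⟨g, hg, h1, h2⟩
    · have hswap : ∃ t ∈ M, t x' = y' ∧ t y' = x' := by
        obtain ⟨n, hn, hncase⟩ := hET u b x' y' hab hxy
        refine ⟨n * (m1⁻¹ * m2) * n⁻¹, M.mul_mem (M.mul_mem hn hsM) (M.inv_mem hn), ?_⟩
        rcases hncase with ⟨hn1, hn2⟩ | ⟨hn1, hn2⟩
        · constructor
          · rw [Equiv.Perm.mul_apply, Equiv.Perm.mul_apply, ← hn1,
              Equiv.Perm.inv_apply_self, hsu, hn2]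
          · rw [Equiv.Perm.mul_apply, Equiv.Perm.mul_apply, ← hn2,
              Equiv.Perm.inv_apply_self, hsb, hn1]
        · constructor
          · rw [Equiv.Perm.mul_apply, Equiv.Perm.mul_apply, ← hn2,
              Equiv.Perm.inv_apply_self, hsb, hn1]
          · rw [Equiv.Perm.mul_apply, Equiv.Perm.mul_apply, ← hn1,
              Equiv.Perm.inv_apply_self, hsu, hn2]
      obtain ⟨t, ht, ht1, ht2⟩ := hswap
      exact ⟨t * g, M.mul_mem ht hg, by rw [Equiv.Perm.mul_apply, h1, ht2],
        by rw [Equiv.Perm.mul_apply, h2, ht1]⟩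
  have Dneg : ∀ {x y}, Γ.Adj x y → (¬ D x y ↔ D y x) :=
    fun {x y} h => ⟨fun hn => (F3 h).resolve_left hn, fun h2 h1 => F4 h1 h2⟩
  have F5 : ∀ {w z z'}, D w z → D w z' → ∃ m ∈ M, m w = w ∧ m z = z' := by
    rintro w z z' ⟨m1, hm1, hm1u, hm1b⟩ ⟨m2, hm2, hm2u, hm2b⟩
    have e1 : m1⁻¹ w = u := by rw [← hm1u, Equiv.Perm.inv_apply_self]
    have e2 : m1⁻¹ z = b := by rw [← hm1b, Equiv.Perm.inv_apply_self]
    exact ⟨m2 * m1⁻¹, M.mul_mem hm2 (M.inv_mem hm1),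
      by rw [Equiv.Perm.mul_apply, e1, hm2u], by rw [Equiv.Perm.mul_apply, e2, hm2b]⟩
  have F6 : ∀ {w z z'}, D z w → D z' w → ∃ m ∈ M, m w = w ∧ m z = z' := by
    rintro w z z' ⟨m1, hm1, hm1u, hm1b⟩ ⟨m2, hm2, hm2u, hm2b⟩
    have e1 : m1⁻¹ w = b := by rw [← hm1b, Equiv.Perm.inv_apply_self]
    have e2 : m1⁻¹ z = u := by rw [← hm1u, Equiv.Perm.inv_apply_self]
    exact ⟨m2 * m1⁻¹, M.mul_mem hm2 (M.inv_mem hm1),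
      by rw [Equiv.Perm.mul_apply, e1, hm2b], by rw [Equiv.Perm.mul_apply, e2, hm2u]⟩
  -- the normality hypothesis, concretely
  have NC : ∀ g ∈ G, g u = u → ∀ m ∈ M, m u = u →
      ∃ m' ∈ M, m' u = u ∧ ∀ v ∈ Γ.neighborSet u, g (m (g⁻¹ v)) = m' v := by
    intro g hg hgu m hm hmu
    have hgaut : g ∈ autGroup Γ := hG hg
    have hmaut : m ∈ autGroup Γ := hMaut hm
    obtain ⟨m', hm', hm'u, hloc⟩ :=
      hnormal _ (nbrPerm_mem hgaut hg hgu) _ (nbrPerm_mem hmaut (by exact hm) hmu)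
    exact ⟨m', hm', hm'u, fun v hv => hloc ⟨v, hv⟩⟩
  have hGinvu : ∀ g : Equiv.Perm V, g u = u → g⁻¹ u = u :=
    fun g hgu => g.injective (by rw [Equiv.Perm.apply_inv_self, hgu])
  -- Claim A: out-neighbours of u
  have clA : ∀ g ∈ G, g u = u → ∀ {z z'}, D u z → D u z' → D u (g z) → D u (g z') := by
    intro g hg hgu z z' hz hz' hgz
    obtain ⟨m, hm, hmu, hmz⟩ := F5 hz hz'
    obtain ⟨m', hm', hm'u, hloc⟩ := NC g hg hgu m hm hmu
    have hgzN : g z ∈ Γ.neighborSet u := F1 hgz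
    have key : g z' = m' (g z) := by
      have h := hloc (g z) hgzN
      rw [Equiv.Perm.inv_apply_self] at h
      rw [← h, hmz]
    rw [key]
    have h2 := F2 m' hm' hgz
    rwa [hm'u] at h2
  -- Claim B: in-neighbours of u
  have clB : ∀ g ∈ G, g u = u → ∀ {z z'}, D z u → D z' u → D (g z) u → D (g z') u := by
    intro g hg hgu z z' hz hz' hgz
    obtain ⟨m, hm, hmu, hmz⟩ := F6 hz hz'
    obtain ⟨m', hm', hm'u, hloc⟩ := NC g hg hgu m hm hmu
    have hgzN : g z ∈ Γ.neighborSet u := (F1 hgz).symm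
    have key : g z' = m' (g z) := by
      have h := hloc (g z) hgzN
      rw [Equiv.Perm.inv_apply_self] at h
      rw [← h, hmz]
    rw [key]
    have h2 := F2 m' hm' hgz
    rwa [hm'u] at h2
  -- local key lemma at u
  have keyU : ∀ g ∈ G, g u = u → ∀ z0, Γ.Adj u z0 → (D u z0 ↔ D u (g z0)) →
      ∀ y, Γ.Adj u y → (D u y ↔ D u (g y)) := by
    intro g hg hgu z0 hz0adj hiff y hyadj
    have hgaut := hG hg
    have adjg : ∀ w, Γ.Adj u w → Γ.Adj u (g w) := by
      intro w hw
      have h := (hgaut u w).mpr hw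
      rwa [hgu] at h
    have hgz0adj := adjg z0 hz0adj
    have hgyadj := adjg y hyadj
    by_cases hz0 : D u z0
    · have hgz0 : D u (g z0) := hiff.mp hz0
      by_cases hy : D u y
      · exact iff_of_true hy (clA g hg hgu hz0 hy hgz0)
      · refine iff_of_false hy (fun hgy => hy ?_)
        have h := clA g⁻¹ (G.inv_mem hg) (hGinvu g hgu) hgz0 hgy (by simpa using hz0)
        simpa using h
    · have hgz0 : ¬ D u (g z0) := fun h => hz0 (hiff.mpr h)
      have hz0d : D z0 u := (Dneg hz0adj).mp hz0
      have hgz0d : D (g z0) u := (Dneg hgz0adj).mp hgz0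
      by_cases hy : D u y
      · refine iff_of_true hy ?_
        by_contra hgy
        have hgyd : D (g y) u := (Dneg hgyadj).mp hgy
        have h := clB g⁻¹ (G.inv_mem hg) (hGinvu g hgu) hgz0d hgyd (by simpa using hz0d)
        rw [Equiv.Perm.inv_apply_self] at h
        exact F4 hy h
      · have hyd : D y u := (Dneg hyadj).mp hy
        refine iff_of_false hy (fun hgy => ?_)
        exact F4 hgy (clB g hg hgu hz0d hyd hgz0d)
  -- key lemma at an arbitrary vertex (transported by vertex-transitivity of M)
  have keyW : ∀ w, ∀ g ∈ G, g w = w → ∀ z0, Γ.Adj w z0 → (D w z0 ↔ D w (g z0)) →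
      ∀ y, Γ.Adj w y → (D w y ↔ D w (g y)) := by
    intro w g hg hgw z0 hz0adj hiff y hyadj
    obtain ⟨n, hn, hnu⟩ := hVT u w
    have hnaut := hMaut hn
    have hg' : n⁻¹ * g * n ∈ G := G.mul_mem (G.mul_mem (G.inv_mem (hMG hn)) hg) (hMG hn)
    have hg'u : (n⁻¹ * g * n) u = u := by
      rw [Equiv.Perm.mul_apply, Equiv.Perm.mul_apply, hnu, hgw, ← hnu,
        Equiv.Perm.inv_apply_self]
    have t1 : ∀ x, D u (n⁻¹ x) ↔ D w x := by
      intro x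
      rw [F2iff n hn u (n⁻¹ x), hnu, Equiv.Perm.apply_inv_self]
    have hz0' : Γ.Adj u (n⁻¹ z0) := by
      have h := hnaut u (n⁻¹ z0)
      rw [hnu, Equiv.Perm.apply_inv_self] at h
      exact h.mp hz0adj
    have hy' : Γ.Adj u (n⁻¹ y) := by
      have h := hnaut u (n⁻¹ y)
      rw [hnu, Equiv.Perm.apply_inv_self] at h
      exact h.mp hyadj
    have happ : ∀ x, (n⁻¹ * g * n) (n⁻¹ x) = n⁻¹ (g x) := by
      intro x
      simp [Equiv.Perm.mul_apply]
    have hpre : D u (n⁻¹ z0) ↔ D u ((n⁻¹ * g * n) (n⁻¹ z0)) := by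
      rw [happ, t1, t1]
      exact hiff
    have hconc := keyU (n⁻¹ * g * n) hg' hg'u (n⁻¹ z0) hz0' hpre (n⁻¹ y) hy'
    rwa [happ, t1, t1] at hconc
  -- the D-preserving subgroup
  let N : Subgroup (Equiv.Perm V) :=
    { carrier := {h | h ∈ G ∧ ∀ x y, D x y ↔ D (h x) (h y)}
      one_mem' := ⟨G.one_mem, fun x y => by simp⟩
      mul_mem' := by
        rintro p q ⟨hpG, hp⟩ ⟨hqG, hq⟩
        refine ⟨G.mul_mem hpG hqG, fun x y => ?_⟩
        rw [Equiv.Perm.mul_apply, Equiv.Perm.mul_apply, ← hp (q x) (q y), ← hq x y]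
      inv_mem' := by
        rintro p ⟨hpG, hp⟩
        refine ⟨G.inv_mem hpG, fun x y => ?_⟩
        have h := hp (p⁻¹ x) (p⁻¹ y)
        simp only [Equiv.Perm.apply_inv_self] at h
        exact h.symm }
  have hmemN : ∀ h : Equiv.Perm V, h ∈ N ↔ h ∈ G ∧ ∀ x y, D x y ↔ D (h x) (h y) :=
    fun h => Iff.rfl
  have hMN : M ≤ N := fun m hm => (hmemN m).mpr ⟨hMG hm, fun x y => F2iff m hm x y⟩
  have hNG : N ≤ G := fun h hh => ((hmemN h).mp hh).1
  have hNM : N = M := by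
    apply hmax N hMN hNG
    refine ⟨le_trans hNG hG, ?_, ?_, ?_⟩
    · intro x y
      obtain ⟨m, hm, hmx⟩ := hVT x y
      exact ⟨m, hMN hm, hmx⟩
    · intro p q x y hpq hxy
      obtain ⟨m, hm, hc⟩ := hET p q x y hpq hxy
      exact ⟨m, hMN hm, hc⟩
    · intro hATN
      obtain ⟨h, hhN, h1, h2⟩ := hATN u b b u hab hab.symm
      obtain ⟨-, hiff⟩ := (hmemN h).mp hhN
      have hDub : D u b := ⟨1, M.one_mem, by simp, by simp⟩
      have h3 := (hiff u b).mp hDub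
      rw [h1, h2] at h3
      exact F4 hDub h3
  -- main argument: kernel elements preserve D, hence lie in N = M
  have hKM : ∀ g : Equiv.Perm V, g ∈ G → g u = u → (∀ v ∈ Γ.neighborSet u, g v = v) →
      g ∈ M := by
    intro g hgG hgu hfix
    have hadjg : ∀ x y : V, Γ.Adj (g x) (g y) ↔ Γ.Adj x y := hG hgG
    have Pstep : ∀ w z, (∀ z', Γ.Adj w z' → (D w z' ↔ D (g w) (g z'))) → Γ.Adj w z →
        ∀ y, Γ.Adj z y → (D z y ↔ D (g z) (g y)) := by
      intro w z hPw hwz y hzy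
      obtain ⟨m, hm, hmgz⟩ := hVT (g z) z
      have hxG : m * g ∈ G := G.mul_mem (hMG hm) hgG
      have hxz : (m * g) z = z := by rw [Equiv.Perm.mul_apply, hmgz]
      have hDm : ∀ x, D (g z) x ↔ D z (m x) := by
        intro x
        have h := F2iff m hm (g z) x
        rwa [hmgz] at h
      have hadjzw : Γ.Adj z w := hwz.symm
      have hadjgzw : Γ.Adj (g z) (g w) := (hadjg z w).mpr hadjzw
      have hrev : D z w ↔ D (g z) (g w) := by
        constructor
        · intro h
          by_contra h2
          have h3 := (Dneg hadjgzw).mp h2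
          have h4 := (hPw z hwz).mpr h3
          exact F4 h4 h
        · intro h
          by_contra h2
          have h3 := (Dneg hadjzw).mp h2
          have h4 := (hPw z hwz).mp h3
          exact F4 h h4
      have hpre : D z w ↔ D z ((m * g) w) := by
        rw [Equiv.Perm.mul_apply, ← hDm (g w)]
        exact hrev
      have hres := keyW z (m * g) hxG hxz w hadjzw hpre y hzy
      rwa [Equiv.Perm.mul_apply, ← hDm (g y)] at hres
    have hwalk : ∀ w w' : V, Γ.Walk w w' → (∀ z, Γ.Adj w z → (D w z ↔ D (g w) (g z))) →
        ∀ z, Γ.Adj w' z → (D w' z ↔ D (g w') (g z)) := by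
      intro w w' p
      induction p with
      | nil => exact fun h => h
      | @cons a c w'' h q ih => exact fun hw => ih (fun y hy => Pstep a c hw h y hy)
    have hP : ∀ w z, Γ.Adj w z → (D w z ↔ D (g w) (g z)) := by
      intro w
      obtain ⟨p⟩ := hconn.preconnected u w
      refine hwalk u w p ?_
      intro z hz
      rw [hgu, hfix z hz]
    have hgmem : g ∈ N := by
      refine (hmemN g).mpr ⟨hgG, fun x y => ?_⟩
      constructor
      · intro h
        exact (hP x y (F1 h)).mp h
      · intro h
        have hadj : Γ.Adj x y := (hadjg x y).mp (F1 h)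
        exact (hP x y hadj).mpr h
    rw [hNM] at hgmem
    exact hgmem
  -- conclude
  apply le_antisymm
  · intro g hg
    simp only [localKernel, Subgroup.mem_inf, Subgroup.mem_iInf,
      MulAction.mem_stabilizer_iff, Equiv.Perm.smul_def] at hg ⊢
    obtain ⟨⟨hgG, hgu⟩, hfix⟩ := hg
    exact ⟨⟨hKM g hgG hgu (fun v hv => hfix v hv), hgu⟩, hfix⟩
  · intro g hg
    simp only [localKernel, Subgroup.mem_inf, Subgroup.mem_iInf,
      MulAction.mem_stabilizer_iff, Equiv.Perm.smul_def] at hg ⊢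
    exact ⟨⟨hMG hg.1.1, hg.1.2⟩, hg.2⟩
end

section
/- Let Γ be a finite connected graph and M ≤ Aut(Γ) a vertex-transitive group such that for every vertex v the induced permutation group M_v^{Γ(v)} on the neighbourhood Γ(v) has order 2 and has no fixed points on Γ(v). Then for every vertex u, the kernel M_u^{[1]} of M_u acting on Γ(u) is trivial, and consequently M_u ≅ Z_2. -/
open SimpleGraph

variable {V : Type*}

section Lemma33Aux

variable {V : Type*}

lemma myNbhd_iff (Γ : SimpleGraph V) {g : Equiv.Perm V}
    (hg : ∀ x y : V, Γ.Adj (g x) (g y) ↔ Γ.Adj x y) {u : V} (hgu : g u = u) :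
    ∀ a : V, a ∈ Γ.neighborSet u ↔ g a ∈ Γ.neighborSet u := by
  intro a
  simp only [SimpleGraph.mem_neighborSet]
  conv_rhs => rw [← hgu]
  rw [hg]

lemma myRestrict_mem (Γ : SimpleGraph V) (M : Subgroup (Equiv.Perm V)) (hM : M ≤ autGroup Γ)
    {g : Equiv.Perm V} (hgM : g ∈ M) {u : V} (hgu : g u = u) :
    Equiv.subtypeEquiv g (myNbhd_iff Γ (hM hgM) hgu) ∈ localGroup Γ M u :=
  ⟨g, hgM, hgu, fun v => rfl⟩

lemma myLocal_eq_one (Γ : SimpleGraph V) (M : Subgroup (Equiv.Perm V)) {v : V}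
    (hcard : Nat.card (localGroup Γ M v) = 2)
    (hnofix : ∀ w : Γ.neighborSet v, ∃ σ ∈ localGroup Γ M v, σ w ≠ w)
    {σ : Equiv.Perm (Γ.neighborSet v)} (hσ : σ ∈ localGroup Γ M v)
    (w : Γ.neighborSet v) (hw : σ w = w) : σ = 1 := by
  by_contra hne
  obtain ⟨τ, hτ, hτw⟩ := hnofix w
  obtain ⟨y, -, hy⟩ := (Nat.card_eq_two_iff' (1 : localGroup Γ M v)).mp hcard
  have h1 : (⟨σ, hσ⟩ : localGroup Γ M v) = y := hy _ (fun h => hne (by simpa using congrArg Subtype.val h))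
  have h2 : (⟨τ, hτ⟩ : localGroup Γ M v) = y := hy _ (fun h => hτw (by
    have : τ = 1 := by simpa using congrArg Subtype.val h
    simp [this]))
  have : σ = τ := by simpa using congrArg Subtype.val (h1.trans h2.symm)
  exact hτw (this ▸ hw)

lemma myFixAll (Γ : SimpleGraph V) (hconn : Γ.Connected)
    (M : Subgroup (Equiv.Perm V)) (hM : M ≤ autGroup Γ)
    (hcard : ∀ v : V, Nat.card (localGroup Γ M v) = 2)
    (hnofix : ∀ v : V, ∀ w : Γ.neighborSet v, ∃ σ ∈ localGroup Γ M v, σ w ≠ w)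
    {g : Equiv.Perm V} (hgM : g ∈ M) {u : V} (hgu : g u = u)
    (hN : ∀ w ∈ Γ.neighborSet u, g w = w) : ∀ v : V, g v = v := by
  set P : V → Prop := fun v => g v = v ∧ ∀ w ∈ Γ.neighborSet v, g w = w with hP
  have step : ∀ v w : V, P v → Γ.Adj v w → P w := by
    intro v w hv hvw
    have hgw : g w = w := hv.2 w hvw
    set σ := Equiv.subtypeEquiv g (myNbhd_iff Γ (hM hgM) hgw) with hσdef
    have hσmem := myRestrict_mem Γ M hM hgM hgw
    have hvmem : v ∈ Γ.neighborSet w := hvw.symm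
    have hfix : σ ⟨v, hvmem⟩ = ⟨v, hvmem⟩ := Subtype.ext hv.1
    have hone : σ = 1 := myLocal_eq_one Γ M (hcard w) (hnofix w) hσmem _ hfix
    refine ⟨hgw, fun x hx => ?_⟩
    have := congrArg (fun e : Equiv.Perm (Γ.neighborSet w) => (e ⟨x, hx⟩ : V)) hone
    exact this
  have hPu : P u := ⟨hgu, hN⟩
  intro v
  obtain ⟨p⟩ := hconn.preconnected u v
  suffices h : ∀ {a b : V} (_ : Γ.Walk a b), P a → P b from (h p hPu).1
  intro a b p
  induction p with
  | nil => exact id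
  | cons h q ih => exact fun ha => ih (step _ _ ha h)

end Lemma33Aux

/-- From the proof of Lemma 3.3: if `M` is a vertex-transitive group of automorphisms
of a connected graph such that every local group `M_v^{Γ(v)}` has order `2` and no
fixed points on `Γ(v)`, then `M_u^{[1]} = 1` and `M_u ≅ Z_2` for every vertex `u`. -/
theorem statement9 {V : Type*} [Fintype V] (Γ : SimpleGraph V)
    (hconn : Γ.Connected)
    (M : Subgroup (Equiv.Perm V)) (hM : M ≤ autGroup Γ)
    (hvt : VertexTransitive Γ M)
    (hcard : ∀ v : V, Nat.card (localGroup Γ M v) = 2)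
    (hnofix : ∀ v : V, ∀ w : Γ.neighborSet v, ∃ σ ∈ localGroup Γ M v, σ w ≠ w)
    (u : V) :
    localKernel Γ M u = ⊥ ∧
    Nonempty (MulAction.stabilizer M u ≃* Multiplicative (ZMod 2)) := by
  classical
  constructor
  · rw [Subgroup.eq_bot_iff_forall]
    intro g hg
    rw [localKernel, Subgroup.mem_inf, Subgroup.mem_inf] at hg
    obtain ⟨⟨hgM, hgu⟩, hginf⟩ := hg
    have hgu' : g u = u := hgu
    have hN : ∀ w ∈ Γ.neighborSet u, g w = w := by
      intro w hw
      have := hginf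
      rw [Subgroup.mem_iInf] at this
      have := this w
      rw [Subgroup.mem_iInf] at this
      exact this hw
    exact Equiv.ext (myFixAll Γ hconn M hM hcard hnofix hgM hgu' hN)
  · have husmul : ∀ x : MulAction.stabilizer M u, ((x : M) : Equiv.Perm V) u = u :=
      fun x => x.2
    let f : MulAction.stabilizer M u → localGroup Γ M u := fun x =>
      ⟨Equiv.subtypeEquiv ((x : M) : Equiv.Perm V) (myNbhd_iff Γ (hM (x : M).2) (husmul x)),
        myRestrict_mem Γ M hM (x : M).2 (husmul x)⟩
    have fmul : ∀ x y, f (x * y) = f x * f y := by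
      intro x y
      apply Subtype.ext
      apply Equiv.ext
      intro v
      apply Subtype.ext
      rfl
    let φ : MulAction.stabilizer M u →* localGroup Γ M u := MonoidHom.mk' f fmul
    have hinj : Function.Injective φ := by
      rw [injective_iff_map_eq_one]
      intro x hx
      have hx' : ∀ w ∈ Γ.neighborSet u, ((x : M) : Equiv.Perm V) w = w := by
        intro w hw
        have := congrArg (fun e : localGroup Γ M u => ((e : Equiv.Perm (Γ.neighborSet u)) ⟨w, hw⟩ : V)) hx
        exact this
      have : ((x : M) : Equiv.Perm V) = 1 :=
        Equiv.ext (myFixAll Γ hconn M hM hcard hnofix (x : M).2 (husmul x) hx')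
      exact Subtype.ext (Subtype.ext this)
    have hsurj : Function.Surjective φ := by
      rintro ⟨σ, hσ⟩
      obtain ⟨g, hgM, hgu, hg⟩ := hσ
      refine ⟨⟨⟨g, hgM⟩, hgu⟩, ?_⟩
      apply Subtype.ext
      apply Equiv.ext
      intro v
      apply Subtype.ext
      exact (hg v).symm
    let e : MulAction.stabilizer M u ≃* localGroup Γ M u :=
      MulEquiv.ofBijective φ ⟨hinj, hsurj⟩
    have hcard' : Nat.card (MulAction.stabilizer M u) = 2 := by
      rw [Nat.card_congr e.toEquiv, hcard u]
    have hcyc : IsCyclic (MulAction.stabilizer M u) :=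
      isCyclic_of_prime_card (p := 2) hcard'
    have e2 := (zmodCyclicMulEquiv hcyc).symm
    rw [hcard'] at e2
    exact ⟨e2⟩
end
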